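/- Maschke's octic surface S = {F = 0} ⊂ ℙ³ is smooth: the only common zero in ℂ⁴ of the four partial derivatives ∂F/∂x₀, ∂F/∂x₁, ∂F/∂x₂, ∂F/∂x₃ of Maschke's octic polynomial F is (0,0,0,0). -/

import Mathlib

open MvPolynomial

/-!
Multiplying `∂F/∂xᵢ` by `xᵢ` turns the singularity equations into equations in `wᵢ = xᵢ⁴` and
`m = (x₀x₁x₂x₃)²`: every `wᵢ` is a root of the one quadratic `6t² - 7σt - 42m`, where `σ = Σ wⱼ`,
and `m² = w₀w₁w₂w₃`. Writing `y` for the root other than `w₀`, Vieta gives `6y = 7σ - 6w₀` and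
`w₀y = -7m`, and each `wᵢ` is `w₀` or `y`. In each of the eight resulting cases these relations
force `w₀ = y = 0`.
-/

noncomputable def F : MvPolynomial (Fin 4) ℂ :=
  X 0 ^ 8 + X 1 ^ 8 + X 2 ^ 8 + X 3 ^ 8 +
    14 * (X 0 ^ 4 * X 1 ^ 4 + X 0 ^ 4 * X 2 ^ 4 + X 0 ^ 4 * X 3 ^ 4 +
          X 1 ^ 4 * X 2 ^ 4 + X 1 ^ 4 * X 3 ^ 4 + X 2 ^ 4 * X 3 ^ 4) +
    168 * (X 0 ^ 2 * X 1 ^ 2 * X 2 ^ 2 * X 3 ^ 2)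

@[simp]
theorem Derivation.map_ofNat {R A M : Type*} [CommSemiring R] [CommSemiring A] [Algebra R A]
    [AddCommMonoid M] [Module A M] [Module R M] (D : Derivation R A M) (n : ℕ) [n.AtLeastTwo] :
    D (no_index (OfNat.ofNat n : A)) = 0 := by
  rw [← Nat.cast_ofNat]
  exact D.map_natCast n

theorem mul_eval_pderiv_F (v : Fin 4 → ℂ) (i : Fin 4) :
    v i * eval v (pderiv i F) =
      8 * v i ^ 8 + 56 * v i ^ 4 * (∑ j, v j ^ 4 - v i ^ 4) + 336 * ∏ j, v j ^ 2 := by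
  fin_cases i <;>
    simp [F, Fin.sum_univ_four, Fin.prod_univ_four, Derivation.leibniz, Derivation.leibniz_pow,
      pderiv_X] <;>
    ring

theorem eq_zero_of_forall_root_of_sum_quadratic {K : Type*} [Field K] [CharZero K]
    {P Q R S m : K} (hm : m ^ 2 = P * Q * R * S)
    (h : ∀ x ∈ [P, Q, R, S], 6 * x ^ 2 - 7 * (P + Q + R + S) * x - 42 * m = 0) :
    P = 0 ∧ Q = 0 ∧ R = 0 ∧ S = 0 := by
  obtain ⟨y, hy⟩ : ∃ y, 6 * y = 7 * (P + Q + R + S) - 6 * P :=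
    ⟨_, mul_div_cancel₀ _ (by norm_num)⟩
  have hP := h P (by simp)
  have hPy : P * y = -7 * m := by linear_combination -hP / 6 + P / 6 * hy
  have two_roots : ∀ x ∈ [Q, R, S], x = P ∨ x = y := by
    intro x hx
    have hx := h x (by simp_all)
    have hfactor : (x - P) * (x - y) = 0 := by
      linear_combination (hx - hP) / 6 - (x - P) / 6 * hy
    rcases mul_eq_zero.1 hfactor with hxP | hxy
    · exact .inl (sub_eq_zero.1 hxP)
    · exact .inr (sub_eq_zero.1 hxy)
  simp only [List.mem_cons, List.not_mem_nil, or_false, forall_eq_or_imp, forall_eq] at two_roots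
  obtain ⟨hQ, hR, hS⟩ := two_roots
  -- `hy` makes `P` and `y` proportional; then `P²y² = 49m²` contradicts `hm` unless both vanish
  rcases hQ with rfl | rfl <;> rcases hR with rfl | rfl <;> rcases hS with rfl | rfl <;> grind

/-- Maschke's octic surface is smooth: the only common zero in `ℂ⁴` of the four partial
derivatives `∂F/∂x₀, ∂F/∂x₁, ∂F/∂x₂, ∂F/∂x₃` is `(0,0,0,0)`. -/
theorem maschke_octic_smooth (v : Fin 4 → ℂ)
    (h : ∀ i : Fin 4, eval v (pderiv i F) = 0) : v = 0 := by
  set m := ∏ j, v j ^ 2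
  have hw : ∀ i, 6 * (v i ^ 4) ^ 2 - 7 * (∑ j, v j ^ 4) * v i ^ 4 - 42 * m = 0 := by
    intro i
    linear_combination -(mul_eval_pderiv_F v i).symm / 8 - v i / 8 * h i
  have hm : m ^ 2 = v 0 ^ 4 * v 1 ^ 4 * v 2 ^ 4 * v 3 ^ 4 := by
    simp only [m, Fin.prod_univ_four]
    ring
  simp only [Fin.sum_univ_four] at hw
  obtain ⟨h0, h1, h2, h3⟩ := eq_zero_of_forall_root_of_sum_quadratic hm (by
    simp only [List.mem_cons, List.not_mem_nil, or_false, forall_eq_or_imp, forall_eq]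
    exact ⟨hw 0, hw 1, hw 2, hw 3⟩)
  rw [pow_eq_zero_iff four_ne_zero] at h0 h1 h2 h3
  funext i
  fin_cases i <;> simp [h0, h1, h2, h3]
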